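/- arXiv:2009.00693 — 4 statements merged into one kernel-verified Lean document; each statement's English description precedes it below -/
import Mathlib

section
/- Let n ≥ 5, 1 ≤ k, ℓ < n/2, and suppose k·ℓ ≡ 1 (mod n) or k·ℓ ≡ -1 (mod n). Then GP(n,k) and GP(n,ℓ) are isomorphic as graphs. -/
/-- The base relation for the generalized Petersen graph `GP(n,k)`:
`a_i ~ a_{i+1}`, `a_i ~ b_i`, `b_i ~ b_{i+k}`, indices mod `n`.
Outer vertices `a_i` are `Sum.inl i`, inner vertices `b_i` are `Sum.inr i`. -/
def gpRel (n k : ℕ) : (ZMod n ⊕ ZMod n) → (ZMod n ⊕ ZMod n) → Prop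
  | Sum.inl i, Sum.inl j => j = i + 1
  | Sum.inl i, Sum.inr j => j = i
  | Sum.inr i, Sum.inr j => j = i + (k : ZMod n)
  | _, _ => False

/-- The generalized Petersen graph `GP(n,k)`. -/
def GP (n k : ℕ) : SimpleGraph (ZMod n ⊕ ZMod n) := SimpleGraph.fromRel (gpRel n k)

/-! Multiplication of indices by `ℓ`, a unit of `ZMod n` because `ℓ k = ±1`, together with
swapping the two rims is the isomorphism: the outer cycle (step `1`) goes to the inner
circulant of step `ℓ`, the inner circulant of step `k` goes to the one of step `ℓ k = ±1`,
which is the outer cycle, and spokes go to spokes. -/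

theorem sub_eq_neg_or_sub_eq_neg_iff {R : Type*} [Ring R] {s x y : R} :
    (y - x = -s ∨ x - y = -s) ↔ (y - x = s ∨ x - y = s) := by
  simp only [← neg_eq_iff_eq_neg, neg_sub, or_comm]

theorem Units.mul_sub_eq_or_iff {R : Type*} [Ring R] (u : Rˣ) {s t x y : R}
    (hst : u * s = t ∨ u * s = -t) :
    (u * y - u * x = t ∨ u * x - u * y = t) ↔ (y - x = s ∨ x - y = s) := by
  rcases hst with rfl | hst
  · simp only [← mul_sub, Units.mul_right_inj]
  · obtain rfl : t = u * -s := by rw [mul_neg, hst, neg_neg]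
    simp only [← mul_sub, Units.mul_right_inj, sub_eq_neg_or_sub_eq_neg_iff]

namespace GP

variable {n k : ℕ} {i j : ZMod n}

theorem adj_inl_inl : (GP n k).Adj (.inl i) (.inl j) ↔ i ≠ j ∧ (j - i = 1 ∨ i - j = 1) := by
  simp [GP, gpRel, sub_eq_iff_eq_add']

theorem adj_inl_inr : (GP n k).Adj (.inl i) (.inr j) ↔ i = j := by
  simp [GP, gpRel, eq_comm]

theorem adj_inr_inl : (GP n k).Adj (.inr i) (.inl j) ↔ i = j := by
  simp [GP, gpRel]

theorem adj_inr_inr : (GP n k).Adj (.inr i) (.inr j) ↔ i ≠ j ∧ (j - i = k ∨ i - j = k) := by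
  simp [GP, gpRel, sub_eq_iff_eq_add']

variable {l : ℕ}

def isoOfUnit (u : (ZMod n)ˣ) (hul : (u : ZMod n) = l)
    (huk : (u : ZMod n) * k = 1 ∨ (u : ZMod n) * k = -1) : GP n k ≃g GP n l where
  toEquiv := (Equiv.sumCongr u.mulLeft u.mulLeft).trans (Equiv.sumComm _ _)
  map_rel_iff' := by
    rintro (i | i) (j | j) <;>
      simp only [Equiv.trans_apply, Equiv.sumCongr_apply, Sum.map_inl, Sum.map_inr,
        Equiv.sumComm_apply, Sum.swap_inl, Sum.swap_inr, Units.mulLeft_apply, adj_inr_inr,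
        adj_inl_inl, adj_inl_inr, adj_inr_inl, ne_eq, Units.mul_right_inj]
    · rw [u.mul_sub_eq_or_iff (.inl (by rw [mul_one, hul]))]
    · rw [u.mul_sub_eq_or_iff huk]

end GP

theorem gp_iso_of_mul_cong_pm_one_general (n k l : ℕ)
    (h : ((k * l : ℕ) : ZMod n) = 1 ∨ ((k * l : ℕ) : ZMod n) = -1) :
    Nonempty (GP n k ≃g GP n l) := by
  have hlk : (l : ZMod n) * k = 1 ∨ (l : ZMod n) * k = -1 := by
    rwa [Nat.cast_mul, mul_comm] at h
  have hl : IsUnit (l : ZMod n) := hlk.elim (IsUnit.of_mul_eq_one _)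
    fun h => IsUnit.of_mul_eq_one (-(k : ZMod n)) (by rw [mul_neg, h, neg_neg])
  exact ⟨GP.isoOfUnit hl.unit hl.unit_spec (by rwa [hl.unit_spec])⟩

/-- If `n ≥ 5`, `1 ≤ k, ℓ < n/2`, and `k·ℓ ≡ ±1 (mod n)`, then `GP(n,k)` and `GP(n,ℓ)`
are isomorphic as graphs. -/
theorem gp_iso_of_mul_cong_pm_one (n k l : ℕ) (hn : 5 ≤ n)
    (hk1 : 1 ≤ k) (hk2 : 2 * k < n) (hl1 : 1 ≤ l) (hl2 : 2 * l < n)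
    (h : ((k * l : ℕ) : ZMod n) = 1 ∨ ((k * l : ℕ) : ZMod n) = -1) :
    Nonempty (GP n k ≃g GP n l) :=
  gp_iso_of_mul_cong_pm_one_general n k l h
end

section
/- No generalized Petersen graph contains a pitfall: for every n ≥ 5 and 1 ≤ k < n/2, and for every pair of adjacent vertices u, v of GP(n,k), the closed neighborhood of v is not contained in the closed neighborhood of u. -/
lemma gp_adj_iff (n k : ℕ) (x y : ZMod n ⊕ ZMod n) :
    (GP n k).Adj x y ↔ x ≠ y ∧ (gpRel n k x y ∨ gpRel n k y x) :=
  SimpleGraph.fromRel_adj _ _ _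


/-- No generalized Petersen graph contains a pitfall: for `n ≥ 5` and `1 ≤ k < n/2`,
for every pair of adjacent vertices `u, v` of `GP(n,k)`, the closed neighborhood of `v`
is not contained in the closed neighborhood of `u`. -/
theorem gp_no_pitfall (n k : ℕ) (hn : 5 ≤ n) (hk1 : 1 ≤ k) (hk2 : 2 * k < n)
    (u v : ZMod n ⊕ ZMod n) (h : (GP n k).Adj u v) :
    ¬ (insert v ((GP n k).neighborSet v) ⊆ insert u ((GP n k).neighborSet u)) := by
  intro hsub
  haveI : NeZero n := ⟨by omega⟩
  have hd : ∀ m : ℕ, 0 < m → m < n → ((m : ZMod n) ≠ 0) := by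
    intro m hm1 hm2 hc
    exact absurd (Nat.le_of_dvd hm1 ((ZMod.natCast_eq_zero_iff m n).mp hc)) (by omega)
  have h1 : (1 : ZMod n) ≠ 0 := by have := hd 1 (by omega) (by omega); simpa using this
  have h2 : (2 : ZMod n) ≠ 0 := by have := hd 2 (by omega) (by omega); simpa using this
  have h3 : (3 : ZMod n) ≠ 0 := by have := hd 3 (by omega) (by omega); simpa using this
  have hk : (k : ZMod n) ≠ 0 := hd k (by omega) (by omega)
  obtain ⟨hne, hrel⟩ := (gp_adj_iff n k u v).mp h
  -- helper to decompose membership conclusions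
  rcases u with i | i <;> rcases v with j | j
  · -- outer-outer
    rcases hrel with hr | hr
    · -- j = i + 1, witness a_{j+1}
      have hj : j = i + 1 := hr
      have hw : Sum.inl (j+1) ∈ insert (Sum.inl j) ((GP n k).neighborSet (Sum.inl j)) :=
        Or.inr ((gp_adj_iff n k _ _).mpr
          ⟨fun hc => h1 (by have := Sum.inl.inj hc; linear_combination -this), Or.inl rfl⟩)
      rcases hsub hw with hc | hc
      · exact h2 (by have := Sum.inl.inj hc; linear_combination this - hj)
      · obtain ⟨-, hr2 | hr2⟩ := (gp_adj_iff n k _ _).mp hc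
        · have : (j:ZMod n)+1 = i+1 := hr2
          exact h1 (by linear_combination this - hj)
        · have : (i:ZMod n) = j+1+1 := hr2
          exact h3 (by linear_combination -this - hj)
    · -- i = j + 1, witness a_{j-1}
      have hi : (i : ZMod n) = j + 1 := hr
      have hw : Sum.inl (j-1) ∈ insert (Sum.inl j) ((GP n k).neighborSet (Sum.inl j)) :=
        Or.inr ((gp_adj_iff n k _ _).mpr
          ⟨fun hc => h1 (by have := Sum.inl.inj hc; linear_combination this),
           Or.inr (show (j:ZMod n) = j - 1 + 1 by ring)⟩)
      rcases hsub hw with hc | hc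
      · exact h2 (by have := Sum.inl.inj hc; linear_combination -this - hi)
      · obtain ⟨-, hr2 | hr2⟩ := (gp_adj_iff n k _ _).mp hc
        · have : (j:ZMod n)-1 = i+1 := hr2
          exact h3 (by linear_combination -this - hi)
        · have : (i:ZMod n) = j-1+1 := hr2
          exact h1 (by linear_combination this - hi)
  · -- outer i, inner j
    rcases hrel with hr | hr
    · have hj : (j : ZMod n) = i := hr
      -- witness b_{j+k}
      have hw : Sum.inr (j + (k:ZMod n)) ∈
          insert (Sum.inr j) ((GP n k).neighborSet (Sum.inr j)) :=
        Or.inr ((gp_adj_iff n k _ _).mpr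
          ⟨fun hc => hk (by have := Sum.inr.inj hc; linear_combination -this), Or.inl rfl⟩)
      rcases hsub hw with hc | hc
      · exact (Sum.inl_ne_inr hc.symm).elim
      · obtain ⟨-, hr2 | hr2⟩ := (gp_adj_iff n k _ _).mp hc
        · have : (j:ZMod n) + k = i := hr2
          exact hk (by linear_combination this - hj)
        · exact (hr2 : False).elim
    · exact (hr : False).elim
  · -- inner i, outer j
    rcases hrel with hr | hr
    · exact (hr : False).elim
    · have hi : (i : ZMod n) = j := hr
      have hw : Sum.inl (j+1) ∈ insert (Sum.inl j) ((GP n k).neighborSet (Sum.inl j)) :=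
        Or.inr ((gp_adj_iff n k _ _).mpr
          ⟨fun hc => h1 (by have := Sum.inl.inj hc; linear_combination -this), Or.inl rfl⟩)
      rcases hsub hw with hc | hc
      · exact (Sum.inl_ne_inr hc).elim
      · obtain ⟨-, hr2 | hr2⟩ := (gp_adj_iff n k _ _).mp hc
        · exact (hr2 : False).elim
        · have : (i : ZMod n) = j + 1 := hr2
          exact h1 (by linear_combination hi - this)
  · -- inner-inner, witness a_j both times
    have hw : Sum.inl j ∈ insert (Sum.inr j) ((GP n k).neighborSet (Sum.inr j)) :=
      Or.inr ((gp_adj_iff n k _ _).mpr ⟨fun hc => Sum.inr_ne_inl hc, Or.inr rfl⟩)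
    rcases hsub hw with hc | hc
    · exact (Sum.inl_ne_inr hc).elim
    · obtain ⟨-, hr2 | hr2⟩ := (gp_adj_iff n k _ _).mp hc
      · exact (hr2 : False).elim
      · have hji : (i : ZMod n) = j := hr2
        rcases hrel with hr | hr
        · have : (j : ZMod n) = i + k := hr
          exact hk (by linear_combination -this - hji)
        · have : (i : ZMod n) = j + k := hr
          exact hk (by linear_combination -this + hji)
end

section
/- In the game of cops and robbers played with c cops on a connected simple graph G of minimum degree δ ≥ 3 and girth at least 9, if c ≤ δ then the robber has a winning strategy; equivalently, the cop number of G is strictly greater than δ. -/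
/-!
Girth at least 9 makes shortest paths of length at most 4 unique: a cop at distance `d ≤ 4` from
`v` approaches `v` through a unique neighbour, its `gate`, and for `d ≤ 3` every other neighbour
of `v` is at distance `d + 1` from the cop. In particular the cops near `v` are partitioned by
their gates.

The robber keeps the invariant `IsSafe δ p v b`: he stands on `v`, having come from `b`, no cop
is within distance 1, and at most `δ - 2` cops within distance 3 approach `v` other than through
`b`. After the cops move, if some neighbour `y₀` of `v` has no cop next to it but is not safe,
at least `δ - 1` cops approach through `y₀` and at least one through every other neighbour, more
than `δ` cops in all. Otherwise every neighbour has a cop next to it; that cop came through this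
neighbour already before its move, so at least `deg v - 1 ≥ δ - 1` cops approached `v` other than
through `b`, contradicting the invariant.

To start, take `v` maximising the sum over the cops of their distances capped at 3. Averaging
over the neighbours of `v` shows that no cop is on `v` and at most one is within distance 2, so
not every neighbour of `v` has a cop next to it and, by the counting above, one of them is a safe
starting vertex.
-/

/-- `copsWin G c` : in the game of cops and robbers on `G`, `c` cops have a winning
strategy. The cops choose initial positions `init` and a move function `F` (each cop
stays put or moves along an edge). The robber then chooses an initial position (knowing
the cops' placement) and a move function (staying put or moving along an edge); cops
move first on each turn. The cops win if at some time a cop occupies the robber's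
current vertex. -/
def copsWin {V : Type*} (G : SimpleGraph V) (c : ℕ) : Prop :=
  ∃ (init : Fin c → V) (F : (Fin c → V) → V → (Fin c → V)),
    (∀ (p : Fin c → V) (r : V) (i : Fin c), F p r i = p i ∨ G.Adj (p i) (F p r i)) ∧
    ∀ (rinit : (Fin c → V) → V) (rmove : (Fin c → V) → V → V),
      (∀ (p : Fin c → V) (r : V), rmove p r = r ∨ G.Adj r (rmove p r)) →
      ∀ (cseq : ℕ → Fin c → V) (rseq : ℕ → V),
        cseq 0 = init → rseq 0 = rinit init →
        (∀ t, cseq (t + 1) = F (cseq t) (rseq t)) →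
        (∀ t, rseq (t + 1) = rmove (cseq (t + 1)) (rseq t)) →
        ∃ (t : ℕ) (i : Fin c), cseq t i = rseq t ∨ cseq (t + 1) i = rseq t

/-- The cop number of `G`: the least number of cops having a winning strategy. -/
noncomputable def copNumber {V : Type*} (G : SimpleGraph V) : ℕ :=
  sInf {c | copsWin G c}

open Finset

namespace SimpleGraph

variable {V : Type*} {G : SimpleGraph V}

lemma Adj.dist_le_add_one {v w : V} (h : G.Adj v w) (u : V) : G.dist u w ≤ G.dist u v + 1 := by
  rcases h.diff_dist_adj (u := u) with h | h | h <;> omega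

lemma dist_le_dist_add_one_of_eq_or_adj {x x' : V} (h : x' = x ∨ G.Adj x x') (u : V) :
    G.dist u x ≤ G.dist u x' + 1 := by
  rcases h with rfl | h
  · exact Nat.le_succ _
  · exact h.symm.dist_le_add_one u

lemma girth_le_length_add_one_of_adj {x v : V} (hxv : G.Adj x v) (w : G.Walk x v)
    (he : s(x, v) ∉ w.edges) : G.girth ≤ w.length + 1 := by
  classical
  have hcycle : (w.bypass.reverse.cons hxv).IsCycle := by
    refine (Walk.cons_isCycle_iff _ hxv).2 ⟨w.bypass_isPath.reverse, fun h => he ?_⟩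
    rw [Walk.edges_reverse, List.mem_reverse] at h
    exact w.edges_bypass_subset_edges h
  have := girth_le_length hcycle
  simp only [Walk.length_cons, Walk.length_reverse] at this
  have := w.length_bypass_le_length
  omega

lemma Connected.exists_walk_length_eq_dist_notMem_support (hconn : G.Connected) {z t v : V}
    (hvt : v ≠ t) (h : G.dist z t ≤ G.dist z v) :
    ∃ w : G.Walk z t, w.length = G.dist z t ∧ v ∉ w.support := by
  classical
  obtain ⟨w, hw⟩ := hconn.exists_walk_length_eq_dist z t
  refine ⟨w, hw, fun hv => ?_⟩
  have hsplit := congr_arg Walk.length (w.take_spec hv)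
  have hz : G.dist z v ≤ (w.takeUntil v hv).length := dist_le _
  have ht : (w.dropUntil v hv).length ≠ 0 := fun h0 => hvt (Walk.eq_of_length_eq_zero h0)
  rw [Walk.length_append] at hsplit
  omega

-- Shortest paths from `z` to `x` and to `x'`, with the edges at `v`, close a cycle of length
-- `2 d(z, v)`.
lemma Connected.eq_of_adj_of_dist_add_one_eq (hconn : G.Connected) {z v x x' : V}
    (hx : G.Adj x v) (hx' : G.Adj x' v) (hd : G.dist z x + 1 = G.dist z v)
    (hd' : G.dist z x' + 1 = G.dist z v) (hg : 2 * G.dist z v < G.girth) : x = x' := by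
  by_contra hne
  obtain ⟨w, hw, hvw⟩ :=
    hconn.exists_walk_length_eq_dist_notMem_support hx.ne' (z := z) (t := x) (by omega)
  obtain ⟨w', hw', hvw'⟩ :=
    hconn.exists_walk_length_eq_dist_notMem_support hx'.ne' (z := z) (t := x') (by omega)
  have he : s(x, v) ∉ ((w.reverse.append w').concat hx').edges := by
    rw [Walk.edges_concat, List.concat_eq_append, List.mem_append, List.mem_singleton,
      Sym2.eq_iff, not_or]
    refine ⟨fun h => ?_, by rintro (⟨h, -⟩ | ⟨h, -⟩) <;> [exact hne h; exact hx.ne h]⟩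
    have := (w.reverse.append w').snd_mem_support_of_mem_edges h
    rw [Walk.mem_support_append_iff, Walk.support_reverse, List.mem_reverse] at this
    exact this.elim hvw hvw'
  have := girth_le_length_add_one_of_adj hx _ he
  simp only [Walk.length_concat, Walk.length_append, Walk.length_reverse] at this
  omega

-- Shortest paths from `z` to `x` and to `v`, with the edge `xv`, close a cycle of length
-- `2 d(z, v) + 1`.
lemma Connected.dist_ne_of_adj (hconn : G.Connected) {z v x : V} (hx : G.Adj x v)
    (hg : 2 * G.dist z v + 1 < G.girth) : G.dist z x ≠ G.dist z v := by
  intro heq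
  obtain ⟨w, hw, hvw⟩ :=
    hconn.exists_walk_length_eq_dist_notMem_support hx.ne' (z := z) (t := x) heq.le
  obtain ⟨w', hw', hxw'⟩ :=
    hconn.exists_walk_length_eq_dist_notMem_support hx.ne (z := z) (t := v) heq.ge
  have he : s(x, v) ∉ (w.reverse.append w').edges := by
    rw [Walk.edges_append, List.mem_append, Walk.edges_reverse, List.mem_reverse, not_or]
    exact ⟨fun h => hvw (w.snd_mem_support_of_mem_edges h),
      fun h => hxw' (w'.fst_mem_support_of_mem_edges h)⟩
  have := girth_le_length_add_one_of_adj hx _ he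
  simp only [Walk.length_append, Walk.length_reverse] at this
  omega

open scoped Classical in
/-- The neighbour of `v` through which a shortest path from `z` reaches `v`; it is `v` itself
when there is none, e.g. when `z = v`. -/
noncomputable def gate (G : SimpleGraph V) (v z : V) : V :=
  if h : ∃ x, G.Adj x v ∧ G.dist z x + 1 = G.dist z v then h.choose else v

lemma Connected.adj_gate (hconn : G.Connected) {v z : V} (hzv : z ≠ v) :
    G.Adj (G.gate v z) v ∧ G.dist z (G.gate v z) + 1 = G.dist z v := by
  have hex : ∃ x, G.Adj x v ∧ G.dist z x + 1 = G.dist z v := by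
    obtain ⟨w, hw⟩ := hconn.exists_walk_length_eq_dist v z
    have hnil : ¬w.Nil := fun h => hzv (Walk.Nil.eq h).symm
    refine ⟨w.snd, (w.adj_snd hnil).symm, ?_⟩
    have h1 : G.dist w.snd z ≤ w.tail.length := dist_le _
    have h2 := w.length_tail_add_one hnil
    have h3 : G.dist z v ≤ G.dist z w.snd + G.dist w.snd v := hconn.dist_triangle
    rw [dist_eq_one_iff_adj.2 (w.adj_snd hnil).symm] at h3
    rw [dist_comm] at hw h1
    omega
  classical
  rw [gate, dif_pos hex]
  exact hex.choose_spec

lemma Connected.eq_gate_of_dist_add_one_eq (hconn : G.Connected) {z v x : V} (hx : G.Adj x v)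
    (hd : G.dist z x + 1 = G.dist z v) (hg : 2 * G.dist z v < G.girth) : x = G.gate v z := by
  have hzv : z ≠ v := by rintro rfl; simp at hd
  obtain ⟨hgv, hgd⟩ := hconn.adj_gate hzv
  exact hconn.eq_of_adj_of_dist_add_one_eq hx hgv hd hgd hg

lemma Connected.dist_eq_add_one_of_ne_gate (hconn : G.Connected) {z v x : V} (hx : G.Adj x v)
    (hne : x ≠ G.gate v z) (hg : 2 * G.dist z v + 1 < G.girth) :
    G.dist z x = G.dist z v + 1 := by
  have hneq := hconn.dist_ne_of_adj hx hg
  rcases hx.symm.diff_dist_adj (u := z) with h | h | h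
  · exact absurd h hneq
  · exact h
  · exact absurd (hconn.eq_gate_of_dist_add_one_eq hx (by omega) (by omega)) hne

lemma Connected.gate_eq_of_dist_le (hconn : G.Connected) {z v y : V} (hvy : G.Adj v y)
    (hle : G.dist z y ≤ G.dist z v) (hg : 2 * G.dist z v + 1 < G.girth) : G.gate v z = y := by
  by_contra hne
  have := hconn.dist_eq_add_one_of_ne_gate hvy.symm (Ne.symm hne) hg
  omega

-- Stepping from `v` to a neighbour, the capped distance from `z` drops only at the gate, and
-- rises at every other neighbour as long as `d(z, v) ≤ 2`.
lemma Connected.sum_min_dist_sub_ge [Fintype V] [DecidableRel G.Adj] (hconn : G.Connected)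
    (hg : 9 ≤ G.girth) (z v : V) :
    (if G.dist z v ≤ 2 then (G.degree v : ℤ) - 1 else 0) +
        (if G.dist z v = 0 then 2 else 0) - 1 ≤
      ∑ y ∈ G.neighborFinset v, (min (G.dist z y : ℤ) 3 - min (G.dist z v : ℤ) 3) := by
  classical
  by_cases hzv : z = v
  · subst hzv
    have hone : ∀ y ∈ G.neighborFinset z,
        min (G.dist z y : ℤ) 3 - min (G.dist z z : ℤ) 3 = 1 := by
      intro y hy
      rw [dist_eq_one_iff_adj.2 ((mem_neighborFinset _ _ _).1 hy), dist_self]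
      norm_num
    rw [sum_congr rfl hone, sum_const, card_neighborFinset_eq_degree, dist_self]
    norm_num
    omega
  · obtain ⟨hgv, hgd⟩ := hconn.adj_gate hzv
    have hgN : G.gate v z ∈ G.neighborFinset v := (mem_neighborFinset _ _ _).2 hgv.symm
    have hrest : ∀ y ∈ (G.neighborFinset v).erase (G.gate v z),
        (if G.dist z v ≤ 2 then 1 else 0 : ℤ) ≤
          min (G.dist z y : ℤ) 3 - min (G.dist z v : ℤ) 3 := by
      intro y hy
      obtain ⟨hyg, hy⟩ := mem_erase.1 hy
      have hvy := (mem_neighborFinset _ _ _).1 hy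
      by_cases hd : G.dist z v ≤ 3
      · have := hconn.dist_eq_add_one_of_ne_gate hvy.symm hyg (by omega)
        split_ifs <;> omega
      · have := hvy.symm.dist_le_add_one z
        split_ifs <;> omega
    have hsum := sum_le_sum hrest
    rw [sum_const, nsmul_eq_mul] at hsum
    have hcard := card_erase_add_one hgN
    rw [card_neighborFinset_eq_degree] at hcard
    have hd0 : G.dist z v ≠ 0 := (hconn.pos_dist_of_ne hzv).ne'
    rw [← add_sum_erase _ _ hgN]
    rw [← hcard]
    push_cast
    split_ifs at hsum ⊢ <;> push_cast at hsum ⊢ <;> omega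

lemma Connected.exists_unoccupied_vertex_card_near_le_one [Fintype V] [DecidableRel G.Adj]
    {c δ : ℕ} (hconn : G.Connected) (hg : 9 ≤ G.girth) (hδ : 3 ≤ δ)
    (hdeg : ∀ v, δ ≤ G.degree v) (hc : c ≤ δ) (p : Fin c → V) :
    ∃ v, (∀ i, p i ≠ v) ∧ #{i | G.dist (p i) v ≤ 2} ≤ 1 := by
  have : Nonempty V := hconn.nonempty
  let H : V → ℤ := fun v => ∑ i, min (G.dist (p i) v : ℤ) 3
  obtain ⟨v, -, hmax⟩ := exists_max_image univ H univ_nonempty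
  have hgain : ∑ i, ((if G.dist (p i) v ≤ 2 then (G.degree v : ℤ) - 1 else 0) +
      (if G.dist (p i) v = 0 then 2 else 0) - 1) ≤ 0 := calc
    _ ≤ ∑ i, ∑ y ∈ G.neighborFinset v,
          (min (G.dist (p i) y : ℤ) 3 - min (G.dist (p i) v : ℤ) 3) :=
      sum_le_sum fun i _ => hconn.sum_min_dist_sub_ge hg (p i) v
    _ = ∑ y ∈ G.neighborFinset v, (H y - H v) := by
      rw [sum_comm]
      simp only [H, sum_sub_distrib]
    _ ≤ 0 := sum_nonpos fun y _ => sub_nonpos.2 (hmax y (mem_univ y))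
  simp only [sum_sub_distrib, sum_add_distrib, sum_ite, sum_const_zero, sum_const, nsmul_eq_mul,
    mul_one, add_zero, card_univ, Fintype.card_fin] at hgain
  set T := #{i | G.dist (p i) v ≤ 2}
  set T₀ := #{i | G.dist (p i) v = 0}
  have hT₀ : T₀ ≤ T :=
    card_le_card fun i hi => mem_filter.2 ⟨mem_univ i, by have := (mem_filter.1 hi).2; omega⟩
  have hd : (3 : ℤ) ≤ G.degree v ∧ (c : ℤ) ≤ G.degree v := by have := hdeg v; omega
  have key : ((T : ℤ) - 1) * (G.degree v - 1) + 2 * T₀ ≤ 1 := by nlinarith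
  refine ⟨v, fun i hi => ?_, ?_⟩
  · have : 0 < T₀ := card_pos.2 ⟨i, mem_filter.2 ⟨mem_univ i, hi ▸ dist_self⟩⟩
    nlinarith [mul_nonneg (by omega : (0 : ℤ) ≤ T - 1)
      (by omega : (0 : ℤ) ≤ G.degree v - 1)]
  · by_contra! hT
    nlinarith [mul_le_mul_of_nonneg_right (by omega : (1 : ℤ) ≤ T - 1)
      (by omega : (0 : ℤ) ≤ G.degree v - 1)]

section Robber

variable {c δ : ℕ}

open scoped Classical in
noncomputable def threats (G : SimpleGraph V) (p : Fin c → V) (v b : V) : Finset (Fin c) :=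
  {i | G.dist (p i) v ≤ 3 ∧ G.gate v (p i) ≠ b}

@[simp]
lemma mem_threats {p : Fin c → V} {v b : V} {i : Fin c} :
    i ∈ G.threats p v b ↔ G.dist (p i) v ≤ 3 ∧ G.gate v (p i) ≠ b := by
  simp [threats]

def IsSafe (G : SimpleGraph V) (δ : ℕ) (p : Fin c → V) (v b : V) : Prop :=
  G.Adj v b ∧ (∀ i, 2 ≤ G.dist (p i) v) ∧ #(G.threats p v b) ≤ δ - 2

lemma Connected.gate_eq_of_mem_threats (hconn : G.Connected) (hg : 9 ≤ G.girth)
    {p : Fin c → V} {v y : V} {i : Fin c} (hvy : G.Adj v y) (hi : i ∈ G.threats p y v) :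
    G.gate v (p i) = y := by
  rw [mem_threats] at hi
  have hd := hconn.dist_eq_add_one_of_ne_gate hvy (Ne.symm hi.2) (by omega)
  exact (hconn.eq_gate_of_dist_add_one_eq hvy.symm hd.symm (by omega)).symm

lemma Connected.exists_gate_eq_of_not_isSafe (hconn : G.Connected) (hg : 9 ≤ G.girth)
    {p : Fin c → V} {v y : V} (hp : ∀ i, p i ≠ v) (hvy : G.Adj v y)
    (h : ¬ G.IsSafe δ p y v) :
    ∃ i, G.gate v (p i) = y := by
  by_cases hblocked : ∃ i, G.dist (p i) y ≤ 1
  · obtain ⟨i, hi⟩ := hblocked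
    have h1 := hconn.pos_dist_of_ne (hp i)
    have h2 := hvy.symm.dist_le_add_one (p i)
    exact ⟨i, hconn.gate_eq_of_dist_le hvy (by omega) (by omega)⟩
  · push Not at hblocked
    obtain ⟨i, hi⟩ : (G.threats p y v).Nonempty := card_pos.1 <| by
      by_contra! h0
      exact h ⟨hvy.symm, fun i => hblocked i, by omega⟩
    exact ⟨i, hconn.gate_eq_of_mem_threats hg hvy hi⟩

lemma sum_card_gate_eq_le [Fintype V] [DecidableRel G.Adj] [DecidableEq V] (p : Fin c → V)
    (v : V) :
    ∑ y ∈ G.neighborFinset v, #{i | G.gate v (p i) = y} ≤ c := by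
  rw [sum_card_fiberwise_eq_card_filter]
  exact (card_filter_le _ _).trans (card_fin c).le

lemma Connected.exists_isSafe_or_forall_exists_dist_le_one [Fintype V] [DecidableRel G.Adj]
    (hconn : G.Connected) (hg : 9 ≤ G.girth) (hc : c ≤ δ) {v : V} (hv : 3 ≤ G.degree v)
    {p : Fin c → V} (hp : ∀ i, p i ≠ v) :
    (∃ y, G.IsSafe δ p y v) ∨ ∀ y, G.Adj v y → ∃ i, G.dist (p i) y ≤ 1 := by
  have := Classical.decEq V
  by_contra! ⟨hunsafe, y₀, hvy₀, hfree⟩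
  have hy₀ : δ - 1 ≤ #{i | G.gate v (p i) = y₀} := by
    have : δ - 2 < #(G.threats p y₀ v) := by
      by_contra! h
      exact hunsafe y₀ ⟨hvy₀.symm, fun i => hfree i, h⟩
    exact (Nat.le_of_pred_lt this).trans <| card_le_card fun i hi =>
      mem_filter.2 ⟨mem_univ i, hconn.gate_eq_of_mem_threats hg hvy₀ hi⟩
  have hy : ∀ y ∈ (G.neighborFinset v).erase y₀, 1 ≤ #{i | G.gate v (p i) = y} := by
    intro y hy
    have hvy := (mem_neighborFinset _ _ _).1 (mem_of_mem_erase hy)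
    obtain ⟨i, hi⟩ := hconn.exists_gate_eq_of_not_isSafe hg hp hvy (hunsafe y)
    exact card_pos.2 ⟨i, mem_filter.2 ⟨mem_univ i, hi⟩⟩
  have hy₀N : y₀ ∈ G.neighborFinset v := (mem_neighborFinset _ _ _).2 hvy₀
  have hsum := sum_card_gate_eq_le (G := G) p v
  rw [← add_sum_erase _ _ hy₀N] at hsum
  have hrest := sum_le_sum hy
  rw [sum_const, smul_eq_mul, mul_one, card_erase_of_mem hy₀N,
    card_neighborFinset_eq_degree] at hrest
  omega

lemma IsSafe.exists_isSafe_of_move [Fintype V] [DecidableRel G.Adj] (hconn : G.Connected)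
    (hg : 9 ≤ G.girth) (hδ : 3 ≤ δ) (hc : c ≤ δ) {p p' : Fin c → V} {v b : V}
    (hv : δ ≤ G.degree v) (hsafe : G.IsSafe δ p v b)
    (hmove : ∀ i, p' i = p i ∨ G.Adj (p i) (p' i)) : ∃ y, G.IsSafe δ p' y v := by
  classical
  obtain ⟨hvb, hfar, hthreats⟩ := hsafe
  have hp' : ∀ i, p' i ≠ v := fun i h => by
    have := dist_le_dist_add_one_of_eq_or_adj (hmove i) v
    rw [h, dist_self, dist_comm] at this
    have := hfar i
    omega
  refine (hconn.exists_isSafe_or_forall_exists_dist_le_one hg hc (by omega) hp').resolve_right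
    fun hblocked => ?_
  have hsub :
      (G.neighborFinset v).erase b ⊆ (G.threats p v b).image (fun i => G.gate v (p i)) := by
    intro y hy
    obtain ⟨hyb, hy⟩ := mem_erase.1 hy
    have hvy := (mem_neighborFinset _ _ _).1 hy
    obtain ⟨i, hi⟩ := hblocked y hvy
    have h2 := dist_le_dist_add_one_of_eq_or_adj (hmove i) y
    have h3 := hvy.symm.dist_le_add_one (p i)
    have := hfar i
    rw [dist_comm, dist_comm (u := y)] at h2
    have hgate := hconn.gate_eq_of_dist_le (z := p i) hvy (by omega) (by omega)
    exact mem_image.2 ⟨i, mem_threats.2 ⟨by omega, hgate ▸ hyb⟩, hgate⟩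
  have := (card_le_card hsub).trans card_image_le
  rw [card_erase_of_mem ((mem_neighborFinset _ _ _).2 hvb), card_neighborFinset_eq_degree] at this
  omega

lemma Connected.exists_isSafe [Fintype V] [DecidableRel G.Adj] (hconn : G.Connected)
    (hg : 9 ≤ G.girth) (hδ : 3 ≤ δ) (hdeg : ∀ v, δ ≤ G.degree v) (hc : c ≤ δ)
    (p : Fin c → V) : ∃ v b, G.IsSafe δ p v b := by
  classical
  obtain ⟨v, hp, hnear⟩ := hconn.exists_unoccupied_vertex_card_near_le_one hg hδ hdeg hc p
  obtain ⟨y, hy⟩ | hblocked :=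
    hconn.exists_isSafe_or_forall_exists_dist_le_one hg hc (hδ.trans (hdeg v)) hp
  · exact ⟨y, v, hy⟩
  · have hsub : G.neighborFinset v ⊆
        ({i | G.dist (p i) v ≤ 2} : Finset (Fin c)).image (fun i => G.gate v (p i)) := by
      intro y hy
      have hvy := (mem_neighborFinset _ _ _).1 hy
      obtain ⟨i, hi⟩ := hblocked y hvy
      have h1 := hconn.pos_dist_of_ne (hp i)
      have h2 := hvy.symm.dist_le_add_one (p i)
      exact mem_image.2 ⟨i, mem_filter.2 ⟨mem_univ i, by omega⟩,
        hconn.gate_eq_of_dist_le hvy (by omega) (by omega)⟩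
    have := (card_le_card hsub).trans card_image_le
    rw [card_neighborFinset_eq_degree] at this
    have := hdeg v
    omega

open scoped Classical in
noncomputable def robberMove (G : SimpleGraph V) (δ : ℕ) (p : Fin c → V) (r : V) : V :=
  if h : ∃ y, G.IsSafe δ p y r then h.choose else r

lemma robberMove_eq_or_adj (p : Fin c → V) (r : V) :
    G.robberMove δ p r = r ∨ G.Adj r (G.robberMove δ p r) := by
  unfold robberMove
  split_ifs with h
  · exact Or.inr h.choose_spec.1.symm
  · exact Or.inl rfl

lemma isSafe_robberMove {p : Fin c → V} {r : V} (h : ∃ y, G.IsSafe δ p y r) :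
    G.IsSafe δ p (G.robberMove δ p r) r := by
  rw [robberMove, dif_pos h]
  exact h.choose_spec

theorem Connected.not_copsWin [Fintype V] [DecidableRel G.Adj] (hconn : G.Connected)
    (hg : 9 ≤ G.girth) (hδ : 3 ≤ δ) (hdeg : ∀ v, δ ≤ G.degree v) (hc : c ≤ δ) :
    ¬ copsWin G c := by
  rintro ⟨init, F, hF, hwin⟩
  obtain ⟨r₀, b₀, h₀⟩ := hconn.exists_isSafe hg hδ hdeg hc init
  let play : ℕ → (Fin c → V) × V := fun t => Nat.rec (init, r₀)
    (fun _ s => (F s.1 s.2, G.robberMove δ (F s.1 s.2) s.2)) t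
  have hsafe : ∀ t, ∃ b, G.IsSafe δ (play t).1 (play t).2 b := by
    intro t
    induction t with
    | zero => exact ⟨b₀, h₀⟩
    | succ t ih =>
      obtain ⟨b, hb⟩ := ih
      exact ⟨(play t).2, isSafe_robberMove
        (hb.exists_isSafe_of_move hconn hg hδ hc (hdeg _) (hF _ _))⟩
  obtain ⟨t, i, hcatch⟩ := hwin (fun _ => r₀) (G.robberMove δ) robberMove_eq_or_adj
    (fun t => (play t).1) (fun t => (play t).2) rfl rfl (fun _ => rfl) (fun _ => rfl)
  obtain ⟨b, -, hfar, -⟩ := hsafe t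
  have h2 := hfar i
  have h1 := dist_le_dist_add_one_of_eq_or_adj (hF (play t).1 (play t).2 i) (play t).2
  rw [dist_comm] at h2
  rcases hcatch with h | h
  · rw [h, dist_self] at h2
    omega
  · change F (play t).1 (play t).2 i = (play t).2 at h
    rw [h, dist_self] at h1
    omega

end Robber

end SimpleGraph

lemma copsWin_card {V : Type*} [Fintype V] (G : SimpleGraph V) : copsWin G (Fintype.card V) :=
  ⟨(Fintype.equivFin V).symm, fun p _ => p, fun _ _ _ => Or.inl rfl,
    fun _ _ _ _ rseq h0 _ _ _ => ⟨0, Fintype.equivFin V (rseq 0), Or.inl (by simp [h0])⟩⟩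

/-- If `G` is a connected simple graph of minimum degree `δ ≥ 3` and girth at least 9,
then `c ≤ δ` cops do not have a winning strategy (the robber can evade forever);
equivalently, the cop number of `G` is strictly greater than `δ`. -/
theorem cop_number_gt_min_degree_of_girth_ge_nine {V : Type*} [Fintype V]
    (G : SimpleGraph V) [DecidableRel G.Adj] (hconn : G.Connected)
    (δ : ℕ) (hδ : 3 ≤ δ) (hdeg : ∀ v : V, δ ≤ G.degree v) (hg : 9 ≤ G.girth) :
    (∀ c ≤ δ, ¬ copsWin G c) ∧ δ < copNumber G := by
  have hlose : ∀ c ≤ δ, ¬ copsWin G c := fun c hc => hconn.not_copsWin hg hδ hdeg hc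
  exact ⟨hlose, lt_of_not_ge fun hle =>
    hlose _ hle (Nat.sInf_mem (s := {c | copsWin G c}) ⟨_, copsWin_card G⟩)⟩
end

section
/- Let G be a simple graph of girth at least 5 in which every vertex has degree exactly 3, and let v be a vertex of G. If three cops occupy vertices of G in a configuration that traps the robber at v (for each edge e incident with v there is a cop at distance at most 2 from v along a path using e), then each of the three cops lies in a distinct branch: no single cop simultaneously covers two different edges incident with v. -/
open SimpleGraph Walk

lemma girth_le_len' {V : Type*} {G : SimpleGraph V} {a : V} (w : G.Walk a a) (hw : w.IsCycle) :
    G.girth ≤ w.length := by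
  have h1 : G.egirth ≤ (w.length : ℕ∞) :=
    iInf_le_of_le a (iInf_le_of_le w (iInf_le _ hw))
  exact ENat.toNat_le_toNat h1 (by simp)

lemma no_triangle' {V : Type*} {G : SimpleGraph V} (hg : 5 ≤ G.girth) {a b c : V}
    (hab : G.Adj a b) (hbc : G.Adj b c) (hca : G.Adj c a) : False := by
  have hac : a ≠ c := hca.ne'
  have hcyc : ((Walk.cons hab (Walk.cons hbc (Walk.cons hca nil))) : G.Walk a a).IsCycle := by
    simp [Walk.isCycle_def, Walk.isTrail_def, hab.ne, hbc.ne, hca.ne, hac, hab.ne', hbc.ne',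
      hca.ne']
  have := girth_le_len' _ hcyc
  simp at this
  omega

lemma no_square' {V : Type*} {G : SimpleGraph V} (hg : 5 ≤ G.girth) {a b c d : V}
    (hab : G.Adj a b) (hbc : G.Adj b c) (hcd : G.Adj c d) (hda : G.Adj d a)
    (hac : a ≠ c) (hbd : b ≠ d) : False := by
  have hcyc : ((Walk.cons hab (Walk.cons hbc (Walk.cons hcd (Walk.cons hda nil)))) :
      G.Walk a a).IsCycle := by
    simp [Walk.isCycle_def, Walk.isTrail_def, hab.ne, hbc.ne, hcd.ne, hda.ne, hab.ne', hbc.ne',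
      hcd.ne', hda.ne', hac, hbd, hac.symm, hbd.symm, Sym2.eq_iff]
  have := girth_le_len' _ hcyc
  simp at this
  omega

/-- Let `G` be a 3-regular simple graph of girth at least 5 and `v` a vertex. Say a cop
at position `p` covers the edge from `v` to a neighbor `u` if `p` is within distance 2
of `v` along a path whose first edge is `vu`, i.e. `p = u`, or `p` is a neighbor of `u`
other than `v`. If three cops trap the robber at `v` (every edge at `v` is covered by
some cop), then the cops occupy three distinct vertices, lying in distinct branches:
no single cop covers two different edges incident with `v`. -/
theorem trapped_cops_in_distinct_branches {V : Type*} [Fintype V] (G : SimpleGraph V)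
    [DecidableRel G.Adj] (h3 : ∀ v : V, G.degree v = 3) (hg : 5 ≤ G.girth)
    (v : V) (cops : Fin 3 → V)
    (htrap : ∀ u : V, G.Adj v u →
      ∃ i : Fin 3, cops i = u ∨ (G.Adj u (cops i) ∧ cops i ≠ v)) :
    Function.Injective cops ∧
    ∀ (i : Fin 3) (u u' : V), G.Adj v u → G.Adj v u' →
      (cops i = u ∨ (G.Adj u (cops i) ∧ cops i ≠ v)) →
      (cops i = u' ∨ (G.Adj u' (cops i) ∧ cops i ≠ v)) → u = u' := by
  -- key: any single vertex covers at most one edge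
  have key : ∀ (p u u' : V), G.Adj v u → G.Adj v u' →
      (p = u ∨ (G.Adj u p ∧ p ≠ v)) → (p = u' ∨ (G.Adj u' p ∧ p ≠ v)) → u = u' := by
    intro p u u' hu hu' h1 h2
    by_contra hne
    rcases h1 with rfl | ⟨h1a, h1v⟩
    · rcases h2 with rfl | ⟨h2a, h2v⟩
      · exact hne rfl
      · exact no_triangle' hg hu h2a.symm hu'.symm
    · rcases h2 with rfl | ⟨h2a, h2v⟩
      · exact no_triangle' hg hu' h1a.symm hu.symm
      · exact no_square' hg hu h1a h2a.symm hu'.symm (Ne.symm h1v) hne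
  refine ⟨?_, fun i u u' hu hu' h1 h2 => key (cops i) u u' hu hu' h1 h2⟩
  -- injectivity: each neighbor gets a distinct cop index; 3 neighbors, 3 cops.
  classical
  -- choice of covering cop for each neighbor
  have hchoice : ∀ u ∈ G.neighborFinset v, ∃ i : Fin 3,
      cops i = u ∨ (G.Adj u (cops i) ∧ cops i ≠ v) := by
    intro u hu
    exact htrap u ((G.mem_neighborFinset v u).mp hu)
  set N := G.neighborFinset v with hN
  have hcard : N.card = 3 := h3 v
  -- define f : N → Fin 3
  choose f hf using fun (u : {x // x ∈ N}) => hchoice u.1 u.2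
  have hfinj : Function.Injective f := by
    intro a b hab
    have ha := hf a
    have hb := hf b
    rw [hab] at ha
    exact Subtype.ext (key (cops (f b)) a.1 b.1
      ((G.mem_neighborFinset v _).mp a.2) ((G.mem_neighborFinset v _).mp b.2) ha hb)
  have hfsurj : Function.Surjective f := by
    have : Fintype.card {x // x ∈ N} = Fintype.card (Fin 3) := by
      simp [Fintype.card_coe, hcard]
    exact ((Fintype.bijective_iff_injective_and_card f).mpr ⟨hfinj, this⟩).surjective
  intro i j hij
  obtain ⟨a, rfl⟩ := hfsurj i
  obtain ⟨b, rfl⟩ := hfsurj j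
  have ha := hf a
  have hb := hf b
  rw [hij] at ha
  have : a = b := Subtype.ext (key (cops (f b)) a.1 b.1
    ((G.mem_neighborFinset v _).mp a.2) ((G.mem_neighborFinset v _).mp b.2) ha hb)
  rw [this]
end
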